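/- For every nonnegative integer n, spt̄_ω(6n+5) ≡ 0 (mod 2). -/

import Mathlib

open PowerSeries Finset

private lemma ringInverse_eq {M : Type*} [CommMonoidWithZero M] {a b : M} (h : a * b = 1) :
    Ring.inverse a = b := by
  have hu : IsUnit a := IsUnit.of_mul_eq_one _ h
  calc Ring.inverse a = Ring.inverse a * (a * b) := by rw [h, mul_one]
    _ = (Ring.inverse a * a) * b := by rw [mul_assoc]
    _ = b := by rw [Ring.inverse_mul_cancel _ hu, one_mul]

private lemma map_ringInverse {R S : Type*} [CommRing R] [CommRing S] (f : R →+* S)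
    {a : R} (h : IsUnit a) : f (Ring.inverse a) = Ring.inverse (f a) := by
  symm
  apply ringInverse_eq
  rw [← map_mul, Ring.mul_inverse_cancel _ h, map_one]

private lemma unit_cancel {M : Type*} [CommMonoidWithZero M] {u c : M} (hu : IsUnit u) :
    u * Ring.inverse (c * u) = Ring.inverse c := by
  rw [Ring.mul_inverse_rev, ← mul_assoc, Ring.mul_inverse_cancel _ hu, one_mul]

private lemma cc_one_sub {R : Type*} [CommRing R] {k : ℕ} (hk : k ≠ 0) :
    constantCoeff (R := R) (1 - X ^ k) = 1 := by
  simp [zero_pow hk]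

private lemma cc_one_add {R : Type*} [CommRing R] {k : ℕ} (hk : k ≠ 0) :
    constantCoeff (R := R) (1 + X ^ k) = 1 := by
  simp [zero_pow hk]

private lemma one_sub_X_pow_mul_mk {R : Type*} [CommRing R] {k : ℕ} (hk : k ≠ 0) :
    (1 - X ^ k : PowerSeries R) * PowerSeries.mk (fun m => if k ∣ m then (1 : R) else 0) = 1 := by
  ext m
  rw [sub_mul, one_mul, map_sub, coeff_mk, coeff_X_pow_mul', coeff_one]
  rcases eq_or_ne m 0 with rfl | hm
  · simp [Nat.le_zero, hk]
  · rw [if_neg hm]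
    by_cases hkm : k ≤ m
    · rw [if_pos hkm, coeff_mk]
      have hiff : k ∣ m ↔ k ∣ m - k := by
        constructor
        · intro h; exact Nat.dvd_sub h dvd_rfl
        · intro h
          have : m - k + k = m := Nat.sub_add_cancel hkm
          rw [← this]; exact Nat.dvd_add h dvd_rfl
      rw [if_congr hiff rfl rfl, sub_self]
    · rw [if_neg hkm, if_neg, sub_zero]
      intro hdvd
      exact hkm (Nat.le_of_dvd (Nat.pos_of_ne_zero hm) hdvd)

private lemma two_eq_zero : (2 : PowerSeries (ZMod 2)) = 0 := by
  rw [← map_ofNat (C (R := ZMod 2)) 2, show (2 : ZMod 2) = 0 from rfl, map_zero]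

private lemma one_sub_eq_one_add (k : ℕ) :
    (1 - X ^ k : PowerSeries (ZMod 2)) = 1 + X ^ k := by
  rw [sub_eq_add_neg]
  congr 1
  have h : (X ^ k : PowerSeries (ZMod 2)) + X ^ k = 0 := by
    rw [← two_mul, two_eq_zero, zero_mul]
  exact neg_eq_of_add_eq_zero_left h

private lemma one_add_sq (n : ℕ) :
    ((1 + X ^ n : PowerSeries (ZMod 2)))^2 = 1 - X ^ (2 * n) := by
  rw [add_sq, one_pow, mul_one, two_eq_zero, zero_mul, add_zero, ← pow_mul,
    show n * 2 = 2 * n from Nat.mul_comm n 2, one_sub_eq_one_add]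

private lemma term_simp (N n : ℕ) (hn : 1 ≤ n) :
    (PowerSeries.map (Int.castRingHom (ZMod 2)))
      ((PowerSeries.X ^ n
        * ∏ j ∈ Finset.Icc 1 n, (1 + PowerSeries.X ^ (n + j))
        * ∏ j ∈ Finset.range (N + 1), (1 + PowerSeries.X ^ (2 * n + 2 + 2 * j)))
      * Ring.inverse ((1 - PowerSeries.X ^ n) ^ 2
        * ∏ j ∈ Finset.Icc 1 n, (1 - PowerSeries.X ^ (n + j))
        * ∏ j ∈ Finset.range (N + 1), (1 - PowerSeries.X ^ (2 * n + 2 + 2 * j))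
        : PowerSeries ℤ))
    = X ^ n * PowerSeries.mk (fun m => if 2 * n ∣ m then (1 : ZMod 2) else 0) := by
  have hn0 : n ≠ 0 := by omega
  -- the denominator is a unit over ℤ
  have hD : IsUnit ((1 - PowerSeries.X ^ n) ^ 2
      * ∏ j ∈ Finset.Icc 1 n, (1 - PowerSeries.X ^ (n + j))
      * ∏ j ∈ Finset.range (N + 1), (1 - PowerSeries.X ^ (2 * n + 2 + 2 * j))
      : PowerSeries ℤ) := by
    rw [PowerSeries.isUnit_iff_constantCoeff, map_mul, map_pow, map_prod, cc_one_sub hn0,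
      Finset.prod_congr rfl fun j _ => show
        (constantCoeff (R := ℤ)) ((1 - X ^ (n + j)) * ∏ i ∈ Finset.range (N + 1),
            (1 - X ^ (2 * n + 2 + 2 * i))) = 1 by
          rw [map_mul, cc_one_sub (show n + j ≠ 0 by omega), map_prod,
            Finset.prod_congr rfl fun i _ => cc_one_sub (show 2 * n + 2 + 2 * i ≠ 0 by omega)]
          simp]
    simp
  rw [map_mul, map_ringInverse _ hD]
  simp only [map_mul, map_pow, map_prod, map_sub, map_add, map_one, PowerSeries.map_X]
  simp only [one_sub_eq_one_add]
  set P : PowerSeries (ZMod 2) := ∏ j ∈ Finset.Icc 1 n,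
    ((1 + X ^ (n + j)) * ∏ i ∈ Finset.range (N + 1), (1 + X ^ (2 * n + 2 + 2 * i))) with hP
  have hPu : IsUnit P := by
    rw [PowerSeries.isUnit_iff_constantCoeff, hP, map_prod,
      Finset.prod_congr rfl fun j _ => show
        (constantCoeff (R := ZMod 2)) ((1 + X ^ (n + j)) * ∏ i ∈ Finset.range (N + 1),
            (1 + X ^ (2 * n + 2 + 2 * i))) = 1 by
          rw [map_mul, cc_one_add (show n + j ≠ 0 by omega), map_prod,
            Finset.prod_congr rfl fun i _ => cc_one_add (show 2 * n + 2 + 2 * i ≠ 0 by omega)]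
          simp]
    simp
  rw [mul_assoc (X ^ n) P, unit_cancel hPu, one_add_sq,
    ringInverse_eq (one_sub_X_pow_mul_mk (show 2 * n ≠ 0 by omega))]

private lemma not_square (n d N : ℕ) (hN : N = 6 * n + 5) : d * d ≠ N := by
  intro h
  have h3 : d * d % 3 = d % 3 * (d % 3) % 3 := Nat.mul_mod d d 3
  rcases (show d % 3 = 0 ∨ d % 3 = 1 ∨ d % 3 = 2 by omega) with h' | h' | h' <;>
    rw [h'] at h3 <;> norm_num at h3 <;> omega

/-- The `N`-th coefficient of the generating function
`∑_{n≥1} qⁿ (−q^{n+1};q)_n (−q^{2n+2};q²)_∞ / ((1−qⁿ)² (q^{n+1};q)_n (q^{2n+2};q²)_∞)`.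
Since only finitely many factors/terms affect the coefficient of `q^N`, the infinite
products and the infinite sum are truncated (harmlessly) at `N`. -/
noncomputable def sptwBar (N : ℕ) : ℤ :=
  PowerSeries.coeff (R := ℤ) N (∑ n ∈ Finset.Icc 1 N,
    (PowerSeries.X ^ n
      * ∏ j ∈ Finset.Icc 1 n, (1 + PowerSeries.X ^ (n + j))
      * ∏ j ∈ Finset.range (N + 1), (1 + PowerSeries.X ^ (2 * n + 2 + 2 * j)))
    * Ring.inverse ((1 - PowerSeries.X ^ n) ^ 2
      * ∏ j ∈ Finset.Icc 1 n, (1 - PowerSeries.X ^ (n + j))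
      * ∏ j ∈ Finset.range (N + 1), (1 - PowerSeries.X ^ (2 * n + 2 + 2 * j))
      : PowerSeries ℤ))

/-- `spt̄_ω(6n+5) ≡ 0 (mod 2)` for every nonnegative integer `n`. -/
theorem sptwBar_six_n_add_five_even (n : ℕ) : (2 : ℤ) ∣ sptwBar (6 * n + 5) := by
  set N := 6 * n + 5 with hN
  have hN0 : N ≠ 0 := by omega
  have key : ((sptwBar N : ℤ) : ZMod 2) = 0 := by
    have hcast : ((sptwBar N : ℤ) : ZMod 2)
        = PowerSeries.coeff (R := ZMod 2) N ((PowerSeries.map (Int.castRingHom (ZMod 2)))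
          (∑ k ∈ Finset.Icc 1 N,
            (PowerSeries.X ^ k
              * ∏ j ∈ Finset.Icc 1 k, (1 + PowerSeries.X ^ (k + j))
              * ∏ j ∈ Finset.range (N + 1), (1 + PowerSeries.X ^ (2 * k + 2 + 2 * j)))
            * Ring.inverse ((1 - PowerSeries.X ^ k) ^ 2
              * ∏ j ∈ Finset.Icc 1 k, (1 - PowerSeries.X ^ (k + j))
              * ∏ j ∈ Finset.range (N + 1), (1 - PowerSeries.X ^ (2 * k + 2 + 2 * j))
              : PowerSeries ℤ))) := by
      rw [PowerSeries.coeff_map]; rfl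
    rw [hcast, map_sum,
      Finset.sum_congr rfl fun k hk => term_simp N k (Finset.mem_Icc.mp hk).1, map_sum,
      Finset.sum_congr rfl fun k hk => by
        rw [coeff_X_pow_mul', if_pos (Finset.mem_Icc.mp hk).2, coeff_mk],
      ← Finset.sum_filter]
    have hfilter : (Finset.Icc 1 N).filter (fun k => 2 * k ∣ N - k) = N.divisors := by
      ext d
      simp only [Finset.mem_filter, Finset.mem_Icc, Nat.mem_divisors]
      constructor
      · rintro ⟨⟨h1, h2⟩, hdvd⟩
        have hd : d ∣ N - d := dvd_trans ⟨2, by ring⟩ hdvd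
        have := Nat.dvd_add hd (dvd_refl d)
        rw [Nat.sub_add_cancel h2] at this
        exact ⟨this, hN0⟩
      · rintro ⟨hd, -⟩
        have hd0 : d ≠ 0 := by rintro rfl; rw [Nat.zero_dvd] at hd; exact hN0 hd
        have hdN : d ≤ N := Nat.le_of_dvd (Nat.pos_of_ne_zero hN0) hd
        refine ⟨⟨by omega, hdN⟩, ?_⟩
        obtain ⟨m, hm⟩ := hd
        have hmodd : m % 2 = 1 := by
          rcases Nat.even_or_odd m with he | ho
          · obtain ⟨r, hr⟩ := he
            have : N % 2 = 0 := Nat.even_iff.mp ⟨d * r, by rw [hm, hr]; ring⟩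
            omega
          · exact Nat.odd_iff.mp ho
        obtain ⟨s, hs⟩ : ∃ s, m = 2 * s + 1 := ⟨m / 2, by omega⟩
        have hNe : N = 2 * (d * s) + d := by rw [hm, hs]; ring
        refine ⟨s, ?_⟩
        have : N - d = 2 * (d * s) := by omega
        rw [this]; ring
    rw [hfilter]
    refine Finset.sum_involution (fun d _ => N / d) (fun a ha => by decide)
      (fun a ha _ => ?_) (fun a ha => ?_) (fun a ha => ?_)
    · -- N / a ≠ a
      intro heq
      replace heq : N / a = a := heq
      have hdvd : a ∣ N := (Nat.mem_divisors.mp ha).1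
      have : a * a = N := by
        conv_rhs => rw [← Nat.mul_div_cancel' hdvd, heq]
      exact not_square n a N hN this
    · exact Nat.mem_divisors.mpr ⟨Nat.div_dvd_of_dvd (Nat.mem_divisors.mp ha).1, hN0⟩
    · exact Nat.div_div_self (Nat.mem_divisors.mp ha).1 hN0
  have := (ZMod.intCast_zmod_eq_zero_iff_dvd (sptwBar N) 2).mp key
  exact_mod_cast this
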